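/- Let 1 < α < 2. There exist constants c ∈ (0,1) and C > 0, depending only on α, such that for every real N ≥ 1, all integers k₂ ≠ k₃ with |k₂| ≤ cN and |k₃| ≤ cN, every ε ∈ (0,1), and every μ ∈ ℝ: #{k ∈ ℤ : |k| > N, |k + k₂ − k₃| ≤ N, and |Φ_{k+k₂−k₃, k₂, k₃} − μ| ≤ N^ε} ≤ C min{ 1 + |k₂ − k₃| , N^ε (1 + N^{2−α}/(1 + |k₂ − k₃|)) }. -/

import Mathlib

/-- The resonance function `Φ_{k₁,k₂,k₃} = |k₁|^α − |k₂|^α + |k₃|^α − |k₁−k₂+k₃|^α`. -/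
noncomputable def resPhi (α : ℝ) (k₁ k₂ k₃ : ℤ) : ℝ :=
  |(k₁ : ℝ)| ^ α - |(k₂ : ℝ)| ^ α + |(k₃ : ℝ)| ^ α - |((k₁ - k₂ + k₃ : ℤ) : ℝ)| ^ α

/-! Take `c = 1/4`, so that `D = |k₂ - k₃| ≤ N/2`. By the symmetry `Φ_{-k₁,-k₂,-k₃} = Φ_{k₁,k₂,k₃}`
we may assume `k₂ < k₃`; then every `k` in the set satisfies `N < k ≤ N + D`, and
`Φ_{k+k₂-k₃,k₂,k₃} = ν - g k` for a constant `ν`, where `g x = x^α - (x - D)^α`.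
Applying the mean value theorem twice (to `t^(α-1)` and then to `g`), `g` grows at rate at least
`λ = α(α-1)(2N)^(α-2) D ≳ D / N^(2-α)` on `[N, 2N]`. Hence all such `k` lie in an interval of
length `min(D, 2N^ε/λ)`, which gives both bounds. -/

lemma mul_rpow_sub_one_mul_sub_le_rpow_sub_rpow {p s t B : ℝ} (hp₀ : 0 ≤ p) (hp₁ : p ≤ 1)
    (hs : 0 < s) (hst : s ≤ t) (htB : t ≤ B) :
    p * B ^ (p - 1) * (t - s) ≤ t ^ p - s ^ p := by
  refine (convex_Icc s t).mul_sub_le_image_sub_of_le_deriv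
    (Real.continuous_rpow_const hp₀).continuousOn (fun x hx => ?_) (fun x hx => ?_)
    s ⟨le_rfl, hst⟩ t ⟨hst, le_rfl⟩ hst
  · rw [interior_Icc] at hx
    exact (Real.hasDerivAt_rpow_const (Or.inl (hs.trans hx.1).ne')).differentiableAt
      |>.differentiableWithinAt
  · rw [interior_Icc] at hx
    rw [(Real.hasDerivAt_rpow_const (Or.inl (hs.trans hx.1).ne')).deriv]
    exact mul_le_mul_of_nonneg_left
      (Real.rpow_le_rpow_of_nonpos (hs.trans hx.1) (hx.2.le.trans htB) (by linarith)) hp₀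

lemma mul_sub_le_rpow_increment_sub {α D B x y : ℝ} (hα₁ : 1 ≤ α) (hα₂ : α ≤ 2) (hD : 0 ≤ D)
    (hDx : D < x) (hxy : x ≤ y) (hyB : y ≤ B) :
    α * (α - 1) * B ^ (α - 2) * D * (y - x) ≤
      (y ^ α - (y - D) ^ α) - (x ^ α - (x - D) ^ α) := by
  have hderiv (t : ℝ) : HasDerivAt (fun t => t ^ α - (t - D) ^ α)
      (α * t ^ (α - 1) - 1 * α * (t - D) ^ (α - 1)) t :=
    (Real.hasDerivAt_rpow_const (Or.inr hα₁)).sub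
      (((hasDerivAt_id t).sub_const D).rpow_const (Or.inr hα₁))
  have hdiff : Differentiable ℝ (fun t => t ^ α - (t - D) ^ α) :=
    fun t => (hderiv t).differentiableAt
  refine (convex_Icc x y).mul_sub_le_image_sub_of_le_deriv hdiff.continuous.continuousOn
    hdiff.differentiableOn (fun t ht => ?_) x ⟨le_rfl, hxy⟩ y ⟨hxy, le_rfl⟩ hxy
  rw [interior_Icc] at ht
  have hgap := mul_rpow_sub_one_mul_sub_le_rpow_sub_rpow (p := α - 1) (s := t - D) (t := t)
    (B := B) (by linarith) (by linarith) (by linarith [ht.1]) (by linarith) (ht.2.le.trans hyB)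
  rw [sub_sub, one_add_one_eq_two, sub_sub_cancel] at hgap
  rw [(hderiv t).deriv]
  linarith [mul_le_mul_of_nonneg_left hgap (by linarith : (0 : ℝ) ≤ α)]

lemma Int.ncard_le_of_sub_le {S : Set ℤ} {m : ℝ} (hm : 0 ≤ m)
    (h : ∀ a ∈ S, ∀ b ∈ S, (a - b : ℝ) ≤ m) : (S.ncard : ℝ) ≤ m + 1 := by
  rcases S.eq_empty_or_nonempty with rfl | ⟨a, ha⟩
  · simp only [Set.ncard_empty, Nat.cast_zero]
    linarith
  have hsub (a b : ℤ) (ha : a ∈ S) (hb : b ∈ S) : a - b ≤ ⌊m⌋ :=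
    Int.le_floor.mpr (by exact_mod_cast h a ha b hb)
  obtain ⟨l, hl, hmin⟩ := Int.exists_least_of_bdd (P := (· ∈ S))
    ⟨a - ⌊m⌋, fun b hb => by linarith [hsub a b ha hb]⟩ ⟨a, ha⟩
  have hS : S ⊆ Finset.Icc l (l + ⌊m⌋) := fun b hb => by
    simp only [Finset.coe_Icc, Set.mem_Icc]
    exact ⟨hmin b hb, by linarith [hsub b l hb hl]⟩
  calc (S.ncard : ℝ) ≤ (Finset.Icc l (l + ⌊m⌋)).card := by
        exact_mod_cast (Set.ncard_le_ncard hS (Finset.finite_toSet _)).trans_eq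
          (Set.ncard_coe_finset _)
    _ = ⌊m⌋ + 1 := by
        rw [Int.card_Icc, show l + ⌊m⌋ + 1 - l = ⌊m⌋ + 1 by ring]
        exact_mod_cast Int.toNat_of_nonneg (by positivity)
    _ ≤ m + 1 := by linarith [Int.floor_le m]

lemma resPhi_neg (α : ℝ) (k₁ k₂ k₃ : ℤ) : resPhi α (-k₁) (-k₂) (-k₃) = resPhi α k₁ k₂ k₃ := by
  simp only [resPhi, Int.cast_neg, abs_neg, show -k₁ - -k₂ + -k₃ = -(k₁ - k₂ + k₃) by ring,
    Int.cast_neg]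

def resonantSet (α N Q μ : ℝ) (k₂ k₃ : ℤ) : Set ℤ :=
  {k : ℤ | N < |(k : ℝ)| ∧ |((k + k₂ - k₃ : ℤ) : ℝ)| ≤ N ∧
    |resPhi α (k + k₂ - k₃) k₂ k₃ - μ| ≤ Q}

lemma ncard_resonantSet_neg (α N Q μ : ℝ) (k₂ k₃ : ℤ) :
    (resonantSet α N Q μ (-k₂) (-k₃)).ncard = (resonantSet α N Q μ k₂ k₃).ncard := by
  rw [← Set.ncard_neg]
  congr 1
  ext k
  simp only [resonantSet, Set.mem_neg, Set.mem_ofPred_eq]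
  rw [show -k + -k₂ - -k₃ = -(k + k₂ - k₃) by ring, resPhi_neg]
  simp only [Int.cast_neg, abs_neg]

lemma ncard_resonantSet_le_of_lt {α N Q μ : ℝ} {k₂ k₃ : ℤ} (hα₁ : 1 < α) (hα₂ : α < 2)
    (hQ : 0 ≤ Q) (hlt : k₂ < k₃) (hDN : 2 * |((k₂ - k₃ : ℤ) : ℝ)| ≤ N) :
    ((resonantSet α N Q μ k₂ k₃).ncard : ℝ) ≤
      min |((k₂ - k₃ : ℤ) : ℝ)|
        (2 * Q / (α * (α - 1) * (2 * N) ^ (α - 2) * |((k₂ - k₃ : ℤ) : ℝ)|)) + 1 := by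
  set D := |((k₂ - k₃ : ℤ) : ℝ)| with hDdef
  have hD : D = k₃ - k₂ := by
    rw [hDdef, abs_of_neg (by exact_mod_cast sub_neg.mpr hlt)]
    push_cast
    ring
  have hD₁ : 1 ≤ D := by
    rw [hD]
    exact_mod_cast Int.add_one_le_iff.mpr (sub_pos.mpr hlt)
  set ν := |(k₃ : ℝ)| ^ α - |(k₂ : ℝ)| ^ α - μ
  have hmem (k : ℤ) (hk : k ∈ resonantSet α N Q μ k₂ k₃) :
      N < k ∧ (k : ℝ) ≤ N + D ∧ |((k : ℝ) ^ α - (k - D) ^ α) - ν| ≤ Q := by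
    obtain ⟨hkN, hshift, hres⟩ := hk
    have hcast : ((k + k₂ - k₃ : ℤ) : ℝ) = k - D := by
      rw [hD]
      push_cast
      ring
    rw [hcast] at hshift
    obtain ⟨hlo, hhi⟩ := abs_le.mp hshift
    have hk : N < k := (lt_abs.mp hkN).resolve_right (by intro h; linarith)
    refine ⟨hk, by linarith, ?_⟩
    rw [resPhi, show k + k₂ - k₃ - k₂ + k₃ = k by ring, hcast,
      abs_of_pos (show (0 : ℝ) < k - D by linarith), abs_of_pos (show (0 : ℝ) < k by linarith)]
      at hres
    rw [← abs_neg]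
    convert hres using 2
    ring
  have hlam : 0 < α * (α - 1) * (2 * N) ^ (α - 2) * D := by
    have : 0 < α * (α - 1) := by nlinarith
    have : 0 < (2 * N) ^ (α - 2) := Real.rpow_pos_of_pos (by linarith) _
    positivity
  refine Int.ncard_le_of_sub_le (le_min (by linarith) (by positivity)) fun a ha b hb => ?_
  obtain ⟨haN, haD, haν⟩ := hmem a ha
  obtain ⟨hbN, hbD, hbν⟩ := hmem b hb
  rcases lt_or_ge (a : ℝ) b with hab | hba
  · exact (sub_neg.mpr hab).le.trans (le_min (by linarith) (by positivity))
  refine le_min (by linarith) ((le_div_iff₀ hlam).mpr ?_)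
  have hgrowth := mul_sub_le_rpow_increment_sub (D := D) (B := 2 * N) hα₁.le hα₂.le (by linarith)
    (by linarith) hba (by linarith)
  linarith [abs_le.mp haν, abs_le.mp hbν]

lemma ncard_resonantSet_le {α N Q μ : ℝ} {k₂ k₃ : ℤ} (hα₁ : 1 < α) (hα₂ : α < 2)
    (hQ : 0 ≤ Q) (hne : k₂ ≠ k₃) (hDN : 2 * |((k₂ - k₃ : ℤ) : ℝ)| ≤ N) :
    ((resonantSet α N Q μ k₂ k₃).ncard : ℝ) ≤
      min |((k₂ - k₃ : ℤ) : ℝ)|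
        (2 * Q / (α * (α - 1) * (2 * N) ^ (α - 2) * |((k₂ - k₃ : ℤ) : ℝ)|)) + 1 := by
  rcases hne.lt_or_gt with hlt | hgt
  · exact ncard_resonantSet_le_of_lt hα₁ hα₂ hQ hlt hDN
  · have hD : |((-k₂ - -k₃ : ℤ) : ℝ)| = |((k₂ - k₃ : ℤ) : ℝ)| := by
      rw [show -k₂ - -k₃ = -(k₂ - k₃) by ring, Int.cast_neg, abs_neg]
    rw [← ncard_resonantSet_neg, ← hD]
    exact ncard_resonantSet_le_of_lt hα₁ hα₂ hQ (neg_lt_neg hgt) (hD ▸ hDN)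

lemma inv_two_mul_rpow_le_two_mul_rpow {α N : ℝ} (hα : 1 ≤ α) (hN : 0 < N) :
    (2 * N ^ (2 - α))⁻¹ ≤ (2 * N) ^ (α - 2) := by
  rw [Real.mul_rpow zero_le_two hN.le, mul_inv, ← Real.rpow_neg hN.le, neg_sub]
  refine mul_le_mul_of_nonneg_right ?_ (by positivity)
  rw [← Real.rpow_neg_one]
  exact Real.rpow_le_rpow_of_exponent_le one_le_two (by linarith)

lemma min_add_one_le_mul_min {A D Q P L : ℝ} (hA : 0 < A) (hD : 1 ≤ D) (hQ : 1 ≤ Q) (hP : 0 < P)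
    (hL : (2 * P)⁻¹ ≤ L) :
    min D (2 * Q / (A * L * D)) + 1 ≤ (1 + 8 / A) * min (1 + D) (Q * (1 + P / (1 + D))) := by
  have hdiv : 2 * Q / (A * L * D) ≤ 8 / A * (Q * (P / (1 + D))) := by
    calc 2 * Q / (A * L * D) ≤ 2 * Q / (A * (2 * P)⁻¹ * D) := by gcongr
      _ = 4 * Q * P / (A * D) := by field_simp; ring
      _ ≤ 8 * Q * P / (A * (1 + D)) := by
        rw [div_le_div_iff₀ (by positivity) (by positivity)]
        have : 0 < Q * P * A := by positivity
        nlinarith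
      _ = 8 / A * (Q * (P / (1 + D))) := by field_simp
  rw [mul_min_of_nonneg _ _ (by positivity)]
  refine le_min ?_ ?_
  · have : 0 ≤ 8 / A * (1 + D) := by positivity
    linarith [min_le_left D (2 * Q / (A * L * D))]
  · have : 0 ≤ 8 / A * Q + Q * (P / (1 + D)) := by positivity
    nlinarith [min_le_right D (2 * Q / (A * L * D))]

/-- **Improved counting bound for the projective (high-frequency) region.**
For `1 < α < 2` there are `c ∈ (0,1)` and `C > 0`, depending only on `α`, such that
for all `N ≥ 1`, all `k₂ ≠ k₃` with `|k₂|, |k₃| ≤ cN`, all `ε ∈ (0,1)` and all `μ ∈ ℝ`: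
`#{k : |k| > N, |k+k₂−k₃| ≤ N, |Φ_{k+k₂−k₃,k₂,k₃} − μ| ≤ N^ε}
  ≤ C min{1+|k₂−k₃|, N^ε (1 + N^{2−α}/(1+|k₂−k₃|))}`. -/
theorem stmt18 (α : ℝ) (hα₁ : 1 < α) (hα₂ : α < 2) :
    ∃ c ∈ Set.Ioo (0 : ℝ) 1, ∃ C > 0, ∀ N : ℝ, 1 ≤ N → ∀ k₂ k₃ : ℤ, k₂ ≠ k₃ →
      |(k₂ : ℝ)| ≤ c * N → |(k₃ : ℝ)| ≤ c * N → ∀ ε : ℝ, 0 < ε → ε < 1 → ∀ μ : ℝ,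
      (({k : ℤ | N < |(k : ℝ)| ∧ |((k + k₂ - k₃ : ℤ) : ℝ)| ≤ N ∧
          |resPhi α (k + k₂ - k₃) k₂ k₃ - μ| ≤ N ^ ε}.ncard : ℝ)) ≤
        C * min (1 + |((k₂ - k₃ : ℤ) : ℝ)|)
          (N ^ ε * (1 + N ^ (2 - α) / (1 + |((k₂ - k₃ : ℤ) : ℝ)|))) := by
  have hA : 0 < α * (α - 1) := by nlinarith
  refine ⟨1 / 4, ⟨by norm_num, by norm_num⟩, 1 + 8 / (α * (α - 1)), by positivity, ?_⟩
  intro N hN k₂ k₃ hne hk₂ hk₃ ε hε _ μ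
  have hDN : 2 * |((k₂ - k₃ : ℤ) : ℝ)| ≤ N := by
    push_cast
    linarith [abs_sub (k₂ : ℝ) k₃]
  have hD : 1 ≤ |((k₂ - k₃ : ℤ) : ℝ)| := by
    exact_mod_cast Int.one_le_abs (sub_ne_zero.mpr hne)
  have hQ : 1 ≤ N ^ ε := Real.one_le_rpow hN hε.le
  exact (ncard_resonantSet_le hα₁ hα₂ (by linarith) hne hDN).trans
    (min_add_one_le_mul_min hA hD hQ (by positivity)
      (inv_two_mul_rpow_le_two_mul_rpow hα₁.le (by linarith)))
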